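/- arXiv:2210.11191 — 8 statements merged into one kernel-verified Lean document; each statement's English description precedes it below -/
import Mathlib

section
/- Lower-segments construction: given a sequence of monotone maps f : [n_0] → [n_1] → ... → [n_k] in Δ, there is a unique commutative ladder diagram whose top row consists of the top coface maps d^⊤ : [i] → [i+1] for i = 0, ..., k-1, whose bottom row is the given sequence, and all of whose vertical maps [i] → [n_i] are last-point-preserving. The resulting rightmost vertical map β(f) : [k] → [n_k] is given explicitly by i ↦ f_k ∘ ... ∘ f_{i+1}(n_i). -/
/-!
The square at `i` says that `v (i+1)` restricted along `d^⊤` is `v i ≫ f_{i+1}`, and `[i+1]` is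
`[i]` plus a new top point, which last-point preservation sends to the top. So `v (i+1)` is forced
by `v i`, and the ladder exists and is unique by recursion on `i`. Chasing `j` along the squares
gives `β(f)(j) = f_k ∘ ⋯ ∘ f_{m+1} (v m j)` for all `j ≤ m ≤ k`; at `m = j` this is
`f_k ∘ ⋯ ∘ f_{j+1} (n_j)`.
-/

open CategoryTheory SimplexCategory Opposite

namespace Paper

/-- A monotone map in `Δ` is last-point-preserving. -/
def LastPreserving {a b : SimplexCategory} (f : a ⟶ b) : Prop :=
  f.toOrderHom (Fin.last a.len) = Fin.last b.len

/-- A monotone map in `Δ` is active (endpoint-preserving). -/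
def Active {a b : SimplexCategory} (f : a ⟶ b) : Prop :=
  f.toOrderHom 0 = 0 ∧ LastPreserving f

/-- Given a chain `[n 0] ⟶ [n 1] ⟶ ⋯ ⟶ [n k]` in `Δ`, the composite
`f_k ∘ ⋯ ∘ f_{i+1} : [n i] ⟶ [n k]` of the tail of the chain. -/
def tailComp {k : ℕ} (n : Fin (k + 1) → ℕ)
    (F : ∀ i : Fin k, SimplexCategory.mk (n i.castSucc) ⟶ SimplexCategory.mk (n i.succ)) :
    ∀ i : Fin (k + 1), (SimplexCategory.mk (n i) ⟶ SimplexCategory.mk (n (Fin.last k))) :=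
  fun i =>
    if h : (i : ℕ) = k then
      eqToHom (by rw [show i = Fin.last k from Fin.ext h])
    else
      have hlt : (i : ℕ) < k := by have := i.is_lt; omega
      F ⟨(i : ℕ), hlt⟩ ≫ tailComp n F ⟨(i : ℕ) + 1, by omega⟩
  termination_by i => k - (i : ℕ)
  decreasing_by simp_wf; omega


/-- A lower-segments ladder over the chain `F` : the top row consists of the
top coface maps `d^⊤ : [i] ⟶ [i+1]`, the bottom row is the chain, and the
vertical maps `v i : [i] ⟶ [n i]` are last-point-preserving and make the
ladder commute. -/
def IsLowerLadder {k : ℕ} (n : Fin (k + 1) → ℕ)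
    (F : ∀ i : Fin k, SimplexCategory.mk (n i.castSucc) ⟶ SimplexCategory.mk (n i.succ))
    (v : ∀ i : Fin (k + 1), SimplexCategory.mk (i : ℕ) ⟶ SimplexCategory.mk (n i)) : Prop :=
  (∀ i, LastPreserving (v i)) ∧
  ∀ i : Fin k, v i.castSucc ≫ F i =
    SimplexCategory.δ (Fin.last ((i : ℕ) + 1)) ≫ v i.succ

open Simplicial

section ExtendLast

variable {i m : ℕ}

def extendLast (g : ⦋i⦌ ⟶ ⦋m⦌) : ⦋i + 1⦌ ⟶ ⦋m⦌ :=
  mkHom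
    { toFun := Fin.lastCases (Fin.last m) g.toOrderHom
      monotone' := by
        intro a b hab
        induction b using Fin.lastCases with
        | last => simpa only [Fin.lastCases_last] using Fin.le_last _
        | cast b =>
          induction a using Fin.lastCases with
          | last => exact absurd hab (by simp)
          | cast a => simpa using g.toOrderHom.monotone (Fin.castSucc_le_castSucc_iff.mp hab) }

lemma δ_last_apply (x : Fin (i + 1)) : (δ (Fin.last (i + 1))).toOrderHom x = x.castSucc :=
  congrFun Fin.succAbove_last x

lemma extendLast_castSucc (g : ⦋i⦌ ⟶ ⦋m⦌) (x : Fin (i + 1)) :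
    (extendLast g).toOrderHom x.castSucc = g.toOrderHom x :=
  Fin.lastCases_castSucc (motive := fun _ => Fin (m + 1)) ..

lemma lastPreserving_extendLast (g : ⦋i⦌ ⟶ ⦋m⦌) : LastPreserving (extendLast g) :=
  Fin.lastCases_last (motive := fun _ => Fin (m + 1)) ..

lemma δ_last_comp_extendLast (g : ⦋i⦌ ⟶ ⦋m⦌) : δ (Fin.last (i + 1)) ≫ extendLast g = g := by
  ext x : 3
  exact (congrArg _ (δ_last_apply x)).trans (extendLast_castSucc g x)

lemma eq_extendLast_of_lastPreserving {g : ⦋i⦌ ⟶ ⦋m⦌} {h : ⦋i + 1⦌ ⟶ ⦋m⦌}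
    (hlast : LastPreserving h) (hg : δ (Fin.last (i + 1)) ≫ h = g) : h = extendLast g := by
  ext x : 3
  induction x using Fin.lastCases with
  | last => exact hlast.trans (lastPreserving_extendLast g).symm
  | cast x =>
    rw [extendLast_castSucc, ← hg, comp_toOrderHom, OrderHom.comp_coe, Function.comp_apply,
      δ_last_apply]

lemma eq_of_lastPreserving_zero {f g : ⦋0⦌ ⟶ ⦋m⦌} (hf : LastPreserving f)
    (hg : LastPreserving g) : f = g :=
  Hom.ext_zero_left f g (hf.trans hg.symm)

end ExtendLast

variable {k : ℕ} {n : Fin (k + 1) → ℕ} {F : ∀ i : Fin k, ⦋n i.castSucc⦌ ⟶ ⦋n i.succ⦌}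

lemma tailComp_last : tailComp n F (Fin.last k) = 𝟙 _ := by
  rw [tailComp, dif_pos (Fin.val_last k), eqToHom_refl]

lemma tailComp_castSucc (i : Fin k) : tailComp n F i.castSucc = F i ≫ tailComp n F i.succ := by
  rw [tailComp, dif_neg (by simp [i.is_lt.ne])]
  rfl

variable (n F) in
def lowerLadder : ∀ i : Fin (k + 1), ⦋i⦌ ⟶ ⦋n i⦌ :=
  Fin.induction (const _ _ (Fin.last _)) fun i v => extendLast (v ≫ F i)

lemma lowerLadder_succ (i : Fin k) :
    lowerLadder n F i.succ = extendLast (lowerLadder n F i.castSucc ≫ F i) :=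
  Fin.induction_succ ..

variable (n F) in
lemma isLowerLadder_lowerLadder : IsLowerLadder n F (lowerLadder n F) := by
  refine ⟨fun i => ?_, fun i => by rw [lowerLadder_succ, δ_last_comp_extendLast]⟩
  induction i using Fin.cases with
  | zero => rfl
  | succ i => rw [lowerLadder_succ]; exact lastPreserving_extendLast _

variable {v : ∀ i : Fin (k + 1), ⦋i⦌ ⟶ ⦋n i⦌}

lemma IsLowerLadder.eq_lowerLadder (hv : IsLowerLadder n F v) : v = lowerLadder n F := by
  funext i
  induction i using Fin.induction with
  | zero => exact eq_of_lastPreserving_zero (hv.1 0) ((isLowerLadder_lowerLadder n F).1 0)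
  | succ i ih =>
    rw [lowerLadder_succ, ← ih]
    exact eq_extendLast_of_lastPreserving (hv.1 _) (hv.2 i).symm

lemma IsLowerLadder.last_apply_castLE (hv : IsLowerLadder n F v) (m : Fin (k + 1))
    (x : Fin (m + 1)) :
    (v (Fin.last k)).toOrderHom (Fin.castLE m.is_lt x) =
      (tailComp n F m).toOrderHom ((v m).toOrderHom x) := by
  induction m using Fin.reverseInduction with
  | last => rw [tailComp_last]; rfl
  | cast i ih =>
    have square := congr_toOrderHom_apply (hv.2 i) x
    rw [comp_toOrderHom, comp_toOrderHom, OrderHom.comp_coe, OrderHom.comp_coe,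
      Function.comp_apply, Function.comp_apply, δ_last_apply] at square
    rw [tailComp_castSucc, comp_toOrderHom, OrderHom.comp_coe, Function.comp_apply, square]
    exact ih x.castSucc

lemma IsLowerLadder.last_apply (hv : IsLowerLadder n F v) (j : Fin (k + 1)) :
    (v (Fin.last k)).toOrderHom j = (tailComp n F j).toOrderHom (Fin.last (n j)) := by
  rw [← hv.1 j]
  exact hv.last_apply_castLE j (Fin.last j)

/-- Lower-segments construction: for any chain `[n 0] ⟶ ⋯ ⟶ [n k]` in `Δ`
there is a unique lower-segments ladder, and its rightmost vertical map
`β(f) : [k] ⟶ [n k]` is given by `j ↦ f_k ∘ ⋯ ∘ f_{j+1}` applied to the last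
element of `[n j]`. -/
theorem lowerSegments {k : ℕ} (n : Fin (k + 1) → ℕ)
    (F : ∀ i : Fin k, SimplexCategory.mk (n i.castSucc) ⟶ SimplexCategory.mk (n i.succ)) :
    (∃! v : ∀ i : Fin (k + 1), SimplexCategory.mk (i : ℕ) ⟶ SimplexCategory.mk (n i),
      IsLowerLadder n F v) ∧
    (∀ v, IsLowerLadder n F v → ∀ j : Fin (k + 1),
      (v (Fin.last k)).toOrderHom j =
        (tailComp n F j).toOrderHom (Fin.last (n j))) :=
  ⟨⟨lowerLadder n F, isLowerLadder_lowerLadder n F, fun _ hv => hv.eq_lowerLadder⟩,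
    fun _ hv => hv.last_apply⟩

end Paper
end

section
/- Middle-segments construction: given a sequence of monotone maps f : [n_0] → [n_1] → ... → [n_k] in Δ, there is a unique commutative ladder whose top row consists of the maps Q(d^⊤) : Q[i] → Q[i+1], whose bottom row is the given sequence, and all of whose vertical maps Q[i] = [2i+1] → [n_i] are active. The resulting rightmost vertical map α(f) : [2k+1] → [n_k] is given by i ↦ f_k ∘ ... ∘ f_{i+1}(n_i) and i' ↦ f_k ∘ ... ∘ f_{i+1}(0), where elements of [2k+1] are written k', ..., 0', 0, ..., k in order. -/
open CategoryTheory SimplexCategory Opposite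

namespace Paper

/-- The action on morphisms of the edgewise subdivision functor
`Q : Δ → Δ`, `[n] ↦ [n]ᵒᵖ ⋆ [n] = [2n+1]`: it acts as `fᵒᵖ` on the first
block (the primed elements `n', …, 0'`) and as `f` on the second block. -/
def Qmap {a b : SimplexCategory} (f : a ⟶ b) :
    SimplexCategory.mk (2 * a.len + 1) ⟶ SimplexCategory.mk (2 * b.len + 1) :=
  SimplexCategory.mkHom
  { toFun := fun i =>
      if h : (i : ℕ) ≤ a.len then
        -- element `(a.len - i)'` goes to `(f (a.len - i))'`
        ⟨b.len - (f.toOrderHom ⟨a.len - (i : ℕ), by omega⟩ : ℕ), by omega⟩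
      else
        -- element `i - (a.len + 1)` of the second block goes to `f` of it
        Fin.mk (b.len + 1 + (f.toOrderHom ⟨(i : ℕ) - (a.len + 1), by
            have := i.is_lt; omega⟩ : ℕ)) (by
          have := (f.toOrderHom ⟨(i : ℕ) - (a.len + 1), by
            have := i.is_lt; omega⟩).is_lt
          omega)
    monotone' := by
      intro i j hij
      have hij' : (i : ℕ) ≤ (j : ℕ) := hij
      dsimp only
      split_ifs with h1 h2 h2
      · have hm := f.toOrderHom.monotone
          (show (⟨a.len - (j : ℕ), by omega⟩ : Fin (a.len + 1)) ≤
              ⟨a.len - (i : ℕ), by omega⟩ from by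
            simp only [Fin.mk_le_mk]; omega)
        simp only [Fin.mk_le_mk] at hm ⊢
        omega
      · simp only [Fin.le_def]
        omega
      · omega
      · have hm := f.toOrderHom.monotone
          (show (⟨(i : ℕ) - (a.len + 1), by have := i.is_lt; omega⟩ : Fin (a.len + 1)) ≤
              ⟨(j : ℕ) - (a.len + 1), by have := j.is_lt; omega⟩ from by
            simp only [Fin.mk_le_mk]; omega)
        simp only [Fin.mk_le_mk] at hm ⊢
        omega }

/-- A middle-segments ladder over the chain `F` : the top row consists of the
maps `Q(d^⊤) : Q[i] ⟶ Q[i+1]`, the bottom row is the chain, and the vertical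
maps `w i : Q[i] = [2i+1] ⟶ [n i]` are active and make the ladder commute. -/
def IsMiddleLadder {k : ℕ} (n : Fin (k + 1) → ℕ)
    (F : ∀ i : Fin k, SimplexCategory.mk (n i.castSucc) ⟶ SimplexCategory.mk (n i.succ))
    (w : ∀ i : Fin (k + 1), SimplexCategory.mk (2 * (i : ℕ) + 1) ⟶ SimplexCategory.mk (n i)) :
    Prop :=
  (∀ i, Active (w i)) ∧
  ∀ i : Fin k, w i.castSucc ≫ F i =
    Qmap (SimplexCategory.δ (Fin.last ((i : ℕ) + 1))) ≫ w i.succ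


/-- Partial composite `F_{i-1} ∘ ⋯ ∘ F_j : [n j] ⟶ [n i]`. -/
def comps {k : ℕ} (n : Fin (k + 1) → ℕ)
    (F : ∀ i : Fin k, SimplexCategory.mk (n i.castSucc) ⟶ SimplexCategory.mk (n i.succ)) :
    ∀ (j i : ℕ) (_hj : j ≤ i) (_hi : i ≤ k),
      (SimplexCategory.mk (n ⟨j, by omega⟩) ⟶ SimplexCategory.mk (n ⟨i, by omega⟩))
  | j, i, hj, hi =>
    if h : j = i then eqToHom (by subst h; rfl)
    else
      (F ⟨j, by omega⟩ :
        SimplexCategory.mk (n ⟨j, by omega⟩) ⟶ SimplexCategory.mk (n ⟨j + 1, by omega⟩)) ≫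
        comps n F (j + 1) i (by omega) hi
  termination_by j i => i - j
  decreasing_by simp_wf; omega

lemma comps_self {k : ℕ} (n : Fin (k + 1) → ℕ)
    (F : ∀ i : Fin k, SimplexCategory.mk (n i.castSucc) ⟶ SimplexCategory.mk (n i.succ))
    (i : ℕ) (h : i ≤ i) (hi : i ≤ k) :
    comps n F i i h hi = eqToHom (rfl) := by
  rw [comps, dif_pos rfl]

lemma comps_step {k : ℕ} (n : Fin (k + 1) → ℕ)
    (F : ∀ i : Fin k, SimplexCategory.mk (n i.castSucc) ⟶ SimplexCategory.mk (n i.succ))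
    (j i : ℕ) (hj : j < i) (hi : i ≤ k) :
    comps n F j i hj.le hi =
      (F ⟨j, by omega⟩ :
        SimplexCategory.mk (n ⟨j, by omega⟩) ⟶ SimplexCategory.mk (n ⟨j + 1, by omega⟩)) ≫
        comps n F (j + 1) i (by omega) hi := by
  rw [comps, dif_neg (by omega)]

lemma comps_top {k : ℕ} (n : Fin (k + 1) → ℕ)
    (F : ∀ i : Fin k, SimplexCategory.mk (n i.castSucc) ⟶ SimplexCategory.mk (n i.succ)) :
    ∀ (j i : ℕ) (hj : j ≤ i) (hik : i < k),
    comps n F j (i + 1) (by omega) (by omega) =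
      comps n F j i hj hik.le ≫
        (F ⟨i, by omega⟩ :
          SimplexCategory.mk (n ⟨i, by omega⟩) ⟶ SimplexCategory.mk (n ⟨i + 1, by omega⟩))
  | j, i, hj, hik => by
    by_cases h : j = i
    · subst h
      rw [comps_step n F j (j+1) (by omega), comps_self, comps_self]
      simp
    · rw [comps_step n F j (i+1) (by omega), comps_step n F j i (by omega),
        comps_top n F (j+1) i (by omega) hik]
      simp
  termination_by j i => i - j
  decreasing_by simp_wf; omega

lemma comps_zero_le {k : ℕ} (n : Fin (k + 1) → ℕ)
    (F : ∀ i : Fin k, SimplexCategory.mk (n i.castSucc) ⟶ SimplexCategory.mk (n i.succ)) :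
    ∀ (j j' i : ℕ) (hjj : j ≤ j') (h1 : j' ≤ i) (hi : i ≤ k),
    ((comps n F j' i h1 hi).toOrderHom 0 : ℕ) ≤
      ((comps n F j i (hjj.trans h1) hi).toOrderHom 0 : ℕ)
  | j, j', i, hjj, h1, hi => by
    by_cases h : j = j'
    · subst h; rfl
    · have hj : j < j' := by omega
      have step : ((comps n F (j+1) i (by omega) hi).toOrderHom 0 : ℕ) ≤
          ((comps n F j i (by omega) hi).toOrderHom 0 : ℕ) := by
        rw [comps_step n F j i (by omega) hi]
        simp only [SimplexCategory.comp_toOrderHom, OrderHom.comp_coe, Function.comp_apply]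
        exact (comps n F (j+1) i (by omega) hi).toOrderHom.monotone (Fin.zero_le _)
      exact le_trans (comps_zero_le n F (j+1) j' i (by omega) h1 hi) step
  termination_by j j' i => j' - j
  decreasing_by simp_wf; omega

lemma comps_last_le {k : ℕ} (n : Fin (k + 1) → ℕ)
    (F : ∀ i : Fin k, SimplexCategory.mk (n i.castSucc) ⟶ SimplexCategory.mk (n i.succ)) :
    ∀ (j j' i : ℕ) (hjj : j ≤ j') (h1 : j' ≤ i) (hi : i ≤ k),
    ((comps n F j i (hjj.trans h1) hi).toOrderHom (Fin.last _) : ℕ) ≤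
      ((comps n F j' i h1 hi).toOrderHom (Fin.last _) : ℕ)
  | j, j', i, hjj, h1, hi => by
    by_cases h : j = j'
    · subst h; rfl
    · have hj : j < j' := by omega
      have step : ((comps n F j i (by omega) hi).toOrderHom (Fin.last _) : ℕ) ≤
          ((comps n F (j+1) i (by omega) hi).toOrderHom (Fin.last _) : ℕ) := by
        rw [comps_step n F j i (by omega) hi]
        simp only [SimplexCategory.comp_toOrderHom, OrderHom.comp_coe, Function.comp_apply]
        exact (comps n F (j+1) i (by omega) hi).toOrderHom.monotone (Fin.le_last _)
      exact le_trans step (comps_last_le n F (j+1) j' i (by omega) h1 hi)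
  termination_by j j' i => j' - j
  decreasing_by simp_wf; omega

lemma comps_zero_le_last {k : ℕ} (n : Fin (k + 1) → ℕ)
    (F : ∀ i : Fin k, SimplexCategory.mk (n i.castSucc) ⟶ SimplexCategory.mk (n i.succ))
    (j j' i : ℕ) (h1 : j ≤ i) (h2 : j' ≤ i) (hi : i ≤ k) :
    ((comps n F j i h1 hi).toOrderHom 0 : ℕ) ≤
      ((comps n F j' i h2 hi).toOrderHom (Fin.last _) : ℕ) := by
  refine le_trans (comps_zero_le n F 0 j i (by omega) h1 hi) ?_
  refine le_trans ?_ (comps_last_le n F 0 j' i (by omega) h2 hi)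
  exact (comps n F 0 i (by omega) hi).toOrderHom.monotone (Fin.zero_le _)


/-- The explicit vertical map `[2i+1] ⟶ [n i]` of the middle-segments ladder. -/
def Wmap {k : ℕ} (n : Fin (k + 1) → ℕ)
    (F : ∀ i : Fin k, SimplexCategory.mk (n i.castSucc) ⟶ SimplexCategory.mk (n i.succ))
    (i : ℕ) (hi : i ≤ k) :
    SimplexCategory.mk (2 * i + 1) ⟶ SimplexCategory.mk (n ⟨i, by omega⟩) :=
  SimplexCategory.mkHom
  { toFun := fun p =>
      if hp : (p : ℕ) ≤ i then
        (comps n F (i - (p : ℕ)) i (by omega) hi).toOrderHom 0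
      else
        (comps n F ((p : ℕ) - (i + 1)) i (by have := p.is_lt; omega) hi).toOrderHom (Fin.last _)
    monotone' := by
      intro p q hpq
      have hpq' : (p : ℕ) ≤ (q : ℕ) := hpq
      have hq := q.is_lt
      dsimp only
      split_ifs with h1 h2 h2
      · rw [Fin.le_def]
        exact comps_zero_le n F (i - (q : ℕ)) (i - (p : ℕ)) i (by omega) (by omega) hi
      · rw [Fin.le_def]
        exact comps_zero_le_last n F (i - (p : ℕ)) ((q : ℕ) - (i + 1)) i (by omega)
          (by omega) hi
      · omega
      · rw [Fin.le_def]
        exact comps_last_le n F ((p : ℕ) - (i + 1)) ((q : ℕ) - (i + 1)) i (by omega)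
          (by omega) hi }

lemma Wmap_unprimed {k : ℕ} (n : Fin (k + 1) → ℕ)
    (F : ∀ i : Fin k, SimplexCategory.mk (n i.castSucc) ⟶ SimplexCategory.mk (n i.succ))
    (i : ℕ) (hi : i ≤ k) (j : ℕ) (hj : j ≤ i) (p : Fin (2 * i + 1 + 1)) (hp : (p : ℕ) = i + 1 + j) :
    (Wmap n F i hi).toOrderHom p = (comps n F j i hj hi).toOrderHom (Fin.last _) := by
  have key : ∀ (j1 j2 : ℕ) (e : j1 = j2) (e1 : j1 ≤ i) (e2 : j2 ≤ i),
      (comps n F j1 i e1 hi).toOrderHom (Fin.last _) =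
        (comps n F j2 i e2 hi).toOrderHom (Fin.last _) := by
    intro j1 j2 e e1 e2; subst e; rfl
  show (if hp : (p : ℕ) ≤ i then
        (comps n F (i - (p : ℕ)) i (by omega) hi).toOrderHom 0
      else
        (comps n F ((p : ℕ) - (i + 1)) i (by have := p.is_lt; omega) hi).toOrderHom
          (Fin.last _)) = _
  rw [dif_neg (by omega)]
  exact key _ _ (by omega) _ _

lemma Wmap_primed {k : ℕ} (n : Fin (k + 1) → ℕ)
    (F : ∀ i : Fin k, SimplexCategory.mk (n i.castSucc) ⟶ SimplexCategory.mk (n i.succ))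
    (i : ℕ) (hi : i ≤ k) (j : ℕ) (hj : j ≤ i) (p : Fin (2 * i + 1 + 1)) (hp : (p : ℕ) = i - j) :
    (Wmap n F i hi).toOrderHom p = (comps n F j i hj hi).toOrderHom 0 := by
  have key : ∀ (j1 j2 : ℕ) (e : j1 = j2) (e1 : j1 ≤ i) (e2 : j2 ≤ i),
      (comps n F j1 i e1 hi).toOrderHom 0 =
        (comps n F j2 i e2 hi).toOrderHom 0 := by
    intro j1 j2 e e1 e2; subst e; rfl
  show (if hp : (p : ℕ) ≤ i then
        (comps n F (i - (p : ℕ)) i (by omega) hi).toOrderHom 0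
      else
        (comps n F ((p : ℕ) - (i + 1)) i (by have := p.is_lt; omega) hi).toOrderHom
          (Fin.last _)) = _
  rw [dif_pos (by omega)]
  exact key _ _ (by omega) _ _

lemma Wmap_zero {k : ℕ} (n : Fin (k + 1) → ℕ)
    (F : ∀ i : Fin k, SimplexCategory.mk (n i.castSucc) ⟶ SimplexCategory.mk (n i.succ))
    (i : ℕ) (hi : i ≤ k) :
    (Wmap n F i hi).toOrderHom 0 = 0 := by
  rw [Wmap_primed n F i hi i le_rfl 0 (by simp), comps_self]
  simp

lemma Wmap_last {k : ℕ} (n : Fin (k + 1) → ℕ)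
    (F : ∀ i : Fin k, SimplexCategory.mk (n i.castSucc) ⟶ SimplexCategory.mk (n i.succ))
    (i : ℕ) (hi : i ≤ k) :
    (Wmap n F i hi).toOrderHom (Fin.last (2 * i + 1)) = Fin.last _ := by
  rw [Wmap_unprimed n F i hi i le_rfl _ (by simp [Fin.val_last]; omega), comps_self]
  simp

lemma Qdelta_apply (i : ℕ) (p : Fin (2 * i + 1 + 1)) :
    ((Qmap (SimplexCategory.δ (Fin.last (i + 1)))).toOrderHom p : ℕ) = (p : ℕ) + 1 := by
  have hp := p.is_lt
  simp only [Qmap, SimplexCategory.mkHom, SimplexCategory.Hom.toOrderHom_mk, OrderHom.coe_mk,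
    SimplexCategory.len_mk]
  split_ifs with h
  · simp only [SimplexCategory.len_mk] at h ⊢
    simp only [SimplexCategory.δ, SimplexCategory.mkHom, SimplexCategory.Hom.toOrderHom_mk,
      Fin.succAboveOrderEmb, Fin.succAbove_last, OrderEmbedding.coe_ofStrictMono,
      Fin.coe_castSucc, SimplexCategory.len_mk, OrderEmbedding.toOrderHom,
      RelEmbedding.coe_mk, Function.Embedding.coeFn_mk, OrderHom.coe_mk]
    omega
  · simp only [SimplexCategory.len_mk] at h hp ⊢
    simp only [SimplexCategory.δ, SimplexCategory.mkHom, SimplexCategory.Hom.toOrderHom_mk,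
      Fin.succAboveOrderEmb, Fin.succAbove_last, OrderEmbedding.coe_ofStrictMono,
      Fin.coe_castSucc, SimplexCategory.len_mk, OrderEmbedding.toOrderHom,
      RelEmbedding.coe_mk, Function.Embedding.coeFn_mk, OrderHom.coe_mk]
    omega


lemma Wmap_succ_apply {k : ℕ} (n : Fin (k + 1) → ℕ)
    (F : ∀ i : Fin k, SimplexCategory.mk (n i.castSucc) ⟶ SimplexCategory.mk (n i.succ))
    (m : ℕ) (hm : m < k) (q : Fin (2 * m + 1 + 1)) (p : Fin (2 * (m + 1) + 1 + 1))
    (hpq : (p : ℕ) = (q : ℕ) + 1) :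
    ((Wmap n F (m + 1) (by omega)).toOrderHom p : ℕ) =
      ((F ⟨m, hm⟩).toOrderHom ((Wmap n F m hm.le).toOrderHom q) : ℕ) := by
  have hq := q.is_lt
  by_cases hqm : (q : ℕ) ≤ m
  · rw [Wmap_primed n F m hm.le (m - (q : ℕ)) (by omega) q (by omega),
      Wmap_primed n F (m + 1) (by omega) (m - (q : ℕ)) (by omega) p (by omega),
      comps_top n F (m - (q : ℕ)) m (by omega) hm]
    simp only [SimplexCategory.comp_toOrderHom, OrderHom.comp_coe, Function.comp_apply]
  · rw [Wmap_unprimed n F m hm.le ((q : ℕ) - (m + 1)) (by omega) q (by omega),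
      Wmap_unprimed n F (m + 1) (by omega) ((q : ℕ) - (m + 1)) (by omega) p (by omega),
      comps_top n F ((q : ℕ) - (m + 1)) m (by omega) hm]
    simp only [SimplexCategory.comp_toOrderHom, OrderHom.comp_coe, Function.comp_apply]

lemma Wmap_square {k : ℕ} (n : Fin (k + 1) → ℕ)
    (F : ∀ i : Fin k, SimplexCategory.mk (n i.castSucc) ⟶ SimplexCategory.mk (n i.succ))
    (i : Fin k) :
    Wmap n F (i : ℕ) (by omega) ≫ F i =
      Qmap (SimplexCategory.δ (Fin.last ((i : ℕ) + 1))) ≫ Wmap n F ((i : ℕ) + 1) (by omega) := by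
  apply SimplexCategory.Hom.ext
  apply OrderHom.ext
  funext q
  apply Fin.ext
  simp only [SimplexCategory.comp_toOrderHom, OrderHom.comp_coe, Function.comp_apply]
  exact (Wmap_succ_apply n F (i : ℕ) i.is_lt q
    ((Qmap (SimplexCategory.δ (Fin.last ((i : ℕ) + 1)))).toOrderHom q)
    (Qdelta_apply (i : ℕ) q)).symm

lemma comps_eq_tailComp {k : ℕ} (n : Fin (k + 1) → ℕ)
    (F : ∀ i : Fin k, SimplexCategory.mk (n i.castSucc) ⟶ SimplexCategory.mk (n i.succ)) :
    ∀ (j : ℕ) (hj : j ≤ k),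
      comps n F j k hj le_rfl = tailComp n F ⟨j, by omega⟩
  | j, hj => by
    by_cases h : j = k
    · subst h
      rw [comps_self n F j le_rfl le_rfl, tailComp, dif_pos rfl]
    · have hlt : j < k := by omega
      rw [comps_step n F j k hlt le_rfl, comps_eq_tailComp n F (j + 1) (by omega)]
      conv_rhs => rw [tailComp]
      rw [dif_neg (show ¬(((⟨j, by omega⟩ : Fin (k + 1)) : ℕ) = k) from h)]
  termination_by j => k - j
  decreasing_by simp_wf; omega

set_option maxHeartbeats 800000 in
lemma ladder_unique {k : ℕ} (n : Fin (k + 1) → ℕ)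
    (F : ∀ i : Fin k, SimplexCategory.mk (n i.castSucc) ⟶ SimplexCategory.mk (n i.succ))
    (w : ∀ i : Fin (k + 1), SimplexCategory.mk (2 * (i : ℕ) + 1) ⟶ SimplexCategory.mk (n i))
    (hw : IsMiddleLadder n F w) :
    ∀ (m : ℕ) (hm : m ≤ k), w ⟨m, by omega⟩ = Wmap n F m hm
  | 0, hm => by
    apply SimplexCategory.Hom.ext
    apply OrderHom.ext
    funext p
    have hplt : (p : ℕ) < 2 * 0 + 1 + 1 := p.is_lt
    by_cases hp0 : (p : ℕ) = 0
    · have hp' : p = 0 := Fin.ext (by simp only [Fin.val_zero]; exact hp0)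
      rw [hp', (hw.1 ⟨0, by omega⟩).1, Wmap_zero]
    · have hp' : p = Fin.last (2 * 0 + 1) := Fin.ext (by rw [Fin.val_last]; omega)
      rw [hp']
      exact ((hw.1 ⟨0, by omega⟩).2).trans (Wmap_last n F 0 hm).symm
  | (m + 1), hm => by
    apply SimplexCategory.Hom.ext
    apply OrderHom.ext
    funext p
    have hplt : (p : ℕ) < 2 * (m + 1) + 1 + 1 := p.is_lt
    by_cases hp0 : (p : ℕ) = 0
    · have hp' : p = 0 := Fin.ext (by simp only [Fin.val_zero]; exact hp0)
      rw [hp', (hw.1 ⟨m + 1, by omega⟩).1, Wmap_zero]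
    · by_cases hpl : (p : ℕ) = 2 * (m + 1) + 1
      · have hp' : p = Fin.last (2 * (m + 1) + 1) := Fin.ext (by rw [Fin.val_last]; omega)
        rw [hp']
        exact ((hw.1 ⟨m + 1, by omega⟩).2).trans (Wmap_last n F (m + 1) hm).symm
      · apply Fin.ext
        have hmlt : m < k := by omega
        have hmle : m ≤ k := by omega
        have ih := ladder_unique n F w hw m hmle
        obtain ⟨q, hq2⟩ : ∃ q : Fin (2 * m + 1 + 1), (q : ℕ) = (p : ℕ) - 1 :=
          ⟨⟨(p : ℕ) - 1, by omega⟩, rfl⟩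
        have hsq' : (w ⟨m, by omega⟩ ≫ F ⟨m, hmlt⟩ :
              SimplexCategory.mk (2 * m + 1) ⟶ SimplexCategory.mk (n ⟨m + 1, by omega⟩)) =
            Qmap (SimplexCategory.δ (Fin.last (m + 1))) ≫ w ⟨m + 1, by omega⟩ :=
          hw.2 ⟨m, hmlt⟩
        have hsq := congrArg
          (fun f : SimplexCategory.mk (2 * m + 1) ⟶ SimplexCategory.mk (n ⟨m + 1, by omega⟩) =>
            ((SimplexCategory.Hom.toOrderHom f) q : ℕ)) hsq'
        simp only [SimplexCategory.comp_toOrderHom, OrderHom.comp_coe,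
          Function.comp_apply] at hsq
        have hQ : (Qmap (SimplexCategory.δ (Fin.last (m + 1)))).toOrderHom q = p :=
          Fin.ext (by rw [Qdelta_apply]; omega)
        have ih' : (w ⟨m, by omega⟩).toOrderHom q = (Wmap n F m hmle).toOrderHom q :=
          congrArg (fun g : SimplexCategory.mk (2 * m + 1) ⟶
              SimplexCategory.mk (n ⟨m, hmle.trans_lt (by omega)⟩) =>
            SimplexCategory.Hom.toOrderHom g q) ih
        have c1 := congrArg
          (fun x : Fin ((SimplexCategory.mk (n ⟨m, hmle.trans_lt (by omega)⟩)).len + 1) =>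
            ((F ⟨m, hmlt⟩).toOrderHom x : ℕ)) ih'
        rw [show p = (Qmap (SimplexCategory.δ (Fin.last (m + 1)))).toOrderHom q from hQ.symm]
        have X := Wmap_succ_apply n F m hmlt q
          ((Qmap (SimplexCategory.δ (Fin.last (m + 1)))).toOrderHom q)
          (Qdelta_apply m q)
        exact hsq.symm.trans (c1.trans X.symm)
  termination_by m => m

set_option maxHeartbeats 800000 in
/-- Middle-segments construction: for any chain `[n 0] ⟶ ⋯ ⟶ [n k]` in `Δ`
there is a unique middle-segments ladder, and its rightmost vertical map
`α(f) : [2k+1] ⟶ [n k]` sends the unprimed element `j` (position `k+1+j`) to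
`f_k ∘ ⋯ ∘ f_{j+1}` of the last element of `[n j]`, and the primed element
`j'` (position `k-j`) to `f_k ∘ ⋯ ∘ f_{j+1}` of the first element of `[n j]`. -/
theorem middleSegments {k : ℕ} (n : Fin (k + 1) → ℕ)
    (F : ∀ i : Fin k, SimplexCategory.mk (n i.castSucc) ⟶ SimplexCategory.mk (n i.succ)) :
    (∃! w : ∀ i : Fin (k + 1), SimplexCategory.mk (2 * (i : ℕ) + 1) ⟶ SimplexCategory.mk (n i),
      IsMiddleLadder n F w) ∧
    (∀ w, IsMiddleLadder n F w → ∀ j : Fin (k + 1),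
      (w (Fin.last k)).toOrderHom ⟨k + 1 + (j : ℕ), by have := j.is_lt; simp only [SimplexCategory.len_mk, Fin.val_last]; omega⟩ =
        (tailComp n F j).toOrderHom (Fin.last (n j)) ∧
      (w (Fin.last k)).toOrderHom ⟨k - (j : ℕ), by simp only [SimplexCategory.len_mk, Fin.val_last]; omega⟩ =
        (tailComp n F j).toOrderHom 0) := by
  have hML : IsMiddleLadder n F (fun i : Fin (k + 1) => Wmap n F (i : ℕ) (Nat.lt_succ_iff.mp i.is_lt)) := by
    constructor
    · intro i
      exact ⟨Wmap_zero n F (i : ℕ) (Nat.lt_succ_iff.mp i.is_lt), Wmap_last n F (i : ℕ) (Nat.lt_succ_iff.mp i.is_lt)⟩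
    · intro i
      exact Wmap_square n F i
  have huniq : ∀ w, IsMiddleLadder n F w → w = fun i : Fin (k + 1) => Wmap n F (i : ℕ) (Nat.lt_succ_iff.mp i.is_lt) := by
    intro w hw
    funext i
    exact ladder_unique n F w hw (i : ℕ) (Nat.lt_succ_iff.mp i.is_lt)
  refine ⟨⟨_, hML, huniq⟩, ?_⟩
  intro w hw j
  have h1 : w (Fin.last k) = Wmap n F k le_rfl := ladder_unique n F w hw k le_rfl
  have hjle : (j : ℕ) ≤ k := Nat.lt_succ_iff.mp j.is_lt
  constructor
  · rw [h1]
    exact (Wmap_unprimed n F k le_rfl (j : ℕ) hjle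
      (⟨k + 1 + (j : ℕ), by have := j.is_lt; omega⟩ : Fin (2 * k + 1 + 1)) rfl).trans
      (by rw [comps_eq_tailComp n F (j : ℕ) hjle])
  · rw [h1]
    exact (Wmap_primed n F k le_rfl (j : ℕ) hjle
      (⟨k - (j : ℕ), by omega⟩ : Fin (2 * k + 1 + 1)) rfl).trans
      (by rw [comps_eq_tailComp n F (j : ℕ) hjle])


end Paper
end

section
/- The lower-segments construction B and the middle-segments construction A are compatible with Q: for any composable sequence f of maps in Δ, applying Q to the entire lower-segments ladder B(f) yields the middle-segments ladder A(Q f) of the image sequence; in particular Q(β(f)) = α(Q f). -/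
open CategoryTheory SimplexCategory Opposite

namespace Paper

lemma Qmap_apply {a b : SimplexCategory} (f : a ⟶ b) (j : Fin (2 * a.len + 2)) :
    ((Qmap f).toOrderHom j : ℕ) =
      if (j : ℕ) ≤ a.len then b.len - (f.toOrderHom ⟨a.len - (j : ℕ), by omega⟩ : ℕ)
      else b.len + 1 + (f.toOrderHom ⟨(j : ℕ) - (a.len + 1), by have := j.is_lt; omega⟩ : ℕ) := by
  by_cases h : (j : ℕ) ≤ a.len
  · rw [if_pos h]
    show ((dite _ _ _ : Fin (2 * b.len + 2)) : ℕ) = _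
    rw [dif_pos h]
  · rw [if_neg h]
    show ((dite _ _ _ : Fin (2 * b.len + 2)) : ℕ) = _
    rw [dif_neg h]

lemma toOrderHom_val_congr {a b : SimplexCategory} (f : a ⟶ b) (x y : Fin (a.len + 1))
    (h : (x : ℕ) = (y : ℕ)) : (f.toOrderHom x : ℕ) = (f.toOrderHom y : ℕ) := by
  rw [Fin.ext h]

lemma Qmap_active {a b : SimplexCategory} (f : a ⟶ b) (h : LastPreserving f) :
    Active (Qmap f) := by
  have hlast : (f.toOrderHom (Fin.last a.len) : ℕ) = b.len := congrArg Fin.val h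
  constructor
  · apply Fin.ext
    have h0 := Qmap_apply f (0 : Fin (2 * a.len + 2))
    rw [if_pos (by simp)] at h0
    have he : (f.toOrderHom ⟨a.len - ((0 : Fin (2 * a.len + 2)) : ℕ), by omega⟩ : ℕ) = b.len := by
      refine (toOrderHom_val_congr f _ (Fin.last a.len) (by simp [Fin.last])).trans hlast
    show ((Qmap f).toOrderHom (0 : Fin (2 * a.len + 2)) : ℕ) = 0
    omega
  · apply Fin.ext
    have h0 := Qmap_apply f (⟨2 * a.len + 1, by omega⟩ : Fin (2 * a.len + 2))
    rw [if_neg (by simp; omega)] at h0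
    have he : (f.toOrderHom ⟨(2 * a.len + 1) - (a.len + 1), by omega⟩ : ℕ) = b.len := by
      refine (toOrderHom_val_congr f _ (Fin.last a.len) (by simp [Fin.last]; omega)).trans hlast
    show ((Qmap f).toOrderHom (⟨2 * a.len + 1, by omega⟩ : Fin (2 * a.len + 2)) : ℕ)
      = ((Fin.last (2 * b.len + 1) : Fin (2 * b.len + 2)) : ℕ)
    simp only [Fin.val_last]
    simp only [Fin.mk_val] at h0 he ⊢
    omega

lemma Qmap_comp {a b c : SimplexCategory} (f : a ⟶ b) (g : b ⟶ c) :
    Qmap (f ≫ g) = Qmap f ≫ Qmap g := by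
  ext j
  show ((Qmap (f ≫ g)).toOrderHom j : ℕ) = ((Qmap g).toOrderHom ((Qmap f).toOrderHom j) : ℕ)
  have h1 := Qmap_apply f j
  have h2 := Qmap_apply g ((Qmap f).toOrderHom j)
  have h3 := Qmap_apply (f ≫ g) j
  have hcomp : ∀ (x : Fin (a.len + 1)),
      ((f ≫ g).toOrderHom x : ℕ) = (g.toOrderHom (f.toOrderHom x) : ℕ) := by
    intro x
    simp only [comp_toOrderHom, OrderHom.comp_coe, Function.comp_apply]
  by_cases hj : (j : ℕ) ≤ a.len
  · rw [if_pos hj] at h1 h3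
    have hfle : (f.toOrderHom ⟨a.len - (j : ℕ), by omega⟩ : ℕ) ≤ b.len := Fin.is_le _
    have hQle : (((Qmap f).toOrderHom j) : ℕ) ≤ b.len := by omega
    rw [if_pos hQle] at h2
    have key : (g.toOrderHom ⟨b.len - (((Qmap f).toOrderHom j) : ℕ), by omega⟩ : ℕ)
        = (g.toOrderHom (f.toOrderHom ⟨a.len - (j : ℕ), by omega⟩) : ℕ) :=
      toOrderHom_val_congr g _ _ (by simp only [Fin.val_mk]; omega)
    rw [h3, h2, key]
    simp only [comp_toOrderHom, OrderHom.comp_coe, Function.comp_apply]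
  · rw [if_neg hj] at h1 h3
    have hQgt : ¬ (((Qmap f).toOrderHom j) : ℕ) ≤ b.len := by rw [h1]; omega
    rw [if_neg hQgt] at h2
    have key : (g.toOrderHom ⟨(((Qmap f).toOrderHom j) : ℕ) - (b.len + 1), by
          have := ((Qmap f).toOrderHom j).is_lt; simp only [len_mk] at this; omega⟩ : ℕ)
        = (g.toOrderHom (f.toOrderHom ⟨(j : ℕ) - (a.len + 1), by
          have := j.is_lt; simp only [len_mk] at this; omega⟩) : ℕ) :=
      toOrderHom_val_congr g _ _ (by simp only [Fin.val_mk]; omega)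
    rw [h3, h2, key]
    simp only [comp_toOrderHom, OrderHom.comp_coe, Function.comp_apply]

lemma delta_last_apply (m : ℕ) (x : Fin (m + 1)) :
    ((SimplexCategory.δ (Fin.last (m + 1))).toOrderHom x : ℕ) = (x : ℕ) := by
  simp [SimplexCategory.δ, Fin.succAbove]

lemma Qmap_delta_last (m : ℕ) (j : Fin (2 * m + 2)) :
    ((Qmap (SimplexCategory.δ (Fin.last (m + 1)))).toOrderHom j : ℕ) = (j : ℕ) + 1 := by
  have h := Qmap_apply (SimplexCategory.δ (Fin.last (m + 1))) j
  by_cases hj : (j : ℕ) ≤ (SimplexCategory.mk m).len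
  · rw [if_pos hj] at h
    refine h.trans ?_
    rw [delta_last_apply]
    simp only [Fin.val_mk, len_mk] at hj ⊢
    omega
  · rw [if_neg hj] at h
    refine h.trans ?_
    rw [delta_last_apply]
    have := j.is_lt
    simp only [len_mk] at hj this ⊢
    omega

lemma eq_of_active_one {b : SimplexCategory} (f g : SimplexCategory.mk 1 ⟶ b)
    (hf : Active f) (hg : Active g) : f = g := by
  ext j
  have h2 : (j : ℕ) = 0 ∨ (j : ℕ) = 1 := by have := j.is_lt; simp only [len_mk] at this; omega
  rcases h2 with h2 | h2
  · have hj : j = 0 := Fin.ext h2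
    rw [hj, hf.1, hg.1]
  · have hj : j = Fin.last (SimplexCategory.mk 1).len := Fin.ext (by simpa using h2)
    rw [hj, hf.2, hg.2]

lemma active_cancel {m : ℕ} {b : SimplexCategory}
    (f g : SimplexCategory.mk (2 * (m + 1) + 1) ⟶ b)
    (hf : Active f) (hg : Active g)
    (h : Qmap (SimplexCategory.δ (Fin.last (m + 1))) ≫ f
        = Qmap (SimplexCategory.δ (Fin.last (m + 1))) ≫ g) : f = g := by
  ext j
  have hjlt : (j : ℕ) < 2 * (m + 1) + 2 := by
    have := j.is_lt; simp only [len_mk] at this; exact this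
  by_cases h0 : (j : ℕ) = 0
  · have hj : j = 0 := Fin.ext h0
    rw [hj, hf.1, hg.1]
  by_cases hl : (j : ℕ) = 2 * (m + 1) + 1
  · have hj : j = Fin.last (SimplexCategory.mk (2 * (m + 1) + 1)).len :=
      Fin.ext (by simpa using hl)
    rw [hj, hf.2, hg.2]
  · set x : Fin (2 * (SimplexCategory.mk m).len + 2) :=
      ⟨(j : ℕ) - 1, by simp only [len_mk]; omega⟩ with hx
    have key : (f.toOrderHom ((Qmap (SimplexCategory.δ (Fin.last (m + 1)))).toOrderHom x) : ℕ)
        = (g.toOrderHom ((Qmap (SimplexCategory.δ (Fin.last (m + 1)))).toOrderHom x) : ℕ) :=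
      congrArg Fin.val (DFunLike.congr_fun (congrArg SimplexCategory.Hom.toOrderHom h) x)
    have him : (Qmap (SimplexCategory.δ (Fin.last (m + 1)))).toOrderHom x = j := by
      apply Fin.ext
      have hq := Qmap_delta_last m x
      rw [hq, hx]
      simp only [Fin.val_mk]
      omega
    rw [him] at key
    exact key

/-- `Q(B(f)) = A(Q f)` : applying the edgewise subdivision functor `Q` to the
entire lower-segments ladder of a chain yields the middle-segments ladder of
the image chain; in particular `Q(β(f)) = α(Q f)`. -/
theorem Q_lowerSegments_eq_middleSegments {k : ℕ} (n : Fin (k + 1) → ℕ)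
    (F : ∀ i : Fin k, SimplexCategory.mk (n i.castSucc) ⟶ SimplexCategory.mk (n i.succ))
    (v : ∀ i : Fin (k + 1), SimplexCategory.mk (i : ℕ) ⟶ SimplexCategory.mk (n i))
    (w : ∀ i : Fin (k + 1), SimplexCategory.mk (2 * (i : ℕ) + 1) ⟶
      SimplexCategory.mk (2 * n i + 1))
    (hv : IsLowerLadder n F v)
    (hw : IsMiddleLadder (fun i => 2 * n i + 1) (fun i => Qmap (F i)) w) :
    ∀ i, Qmap (v i) = w i := by
  intro i
  induction i using Fin.induction with
  | zero =>
      exact eq_of_active_one _ _ (Qmap_active _ (hv.1 0)) (hw.1 0)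
  | succ i ih =>
      refine active_cancel (m := (i : ℕ)) _ _ (Qmap_active _ (hv.1 i.succ)) (hw.1 i.succ) ?_
      rw [← Qmap_comp, ← hv.2 i, Qmap_comp, ih, hw.2 i]

end Paper
end

section
/- A simplicial map between simplicial spaces is a right fibration if and only if it is cartesian on each last-point inclusion [0] → [n]; that is, if for every n the square formed by the maps induced by the last-vertex inclusion is a pullback, then the map is cartesian on all last-point-preserving maps of Δ. -/
/-! A last-point-preserving `f : [m] ⟶ [n]` carries the last-point inclusion of `[m]` to that
of `[n]`. So the square of `f`, pasted with the pullback square of `[0] ⟶ [m]`, gives the pullback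
square of `[0] ⟶ [n]`, and the pasting lemma makes the square of `f` a pullback. -/

open CategoryTheory SimplexCategory Opposite

namespace Paper

universe u

variable {X Y : SimplexCategoryᵒᵖ ⥤ Type u}

/-- A simplicial map `p : Y ⟶ X` is cartesian on a map `f` of `Δ` if the
corresponding naturality square is a pullback. -/
def IsCartesianOn (p : Y ⟶ X) {a b : SimplexCategory} (f : a ⟶ b) : Prop :=
  IsPullback (Y.map f.op) (p.app (op b)) (p.app (op a)) (X.map f.op)

/-- A simplicial map is a right fibration if it is cartesian on every
last-point-preserving map of `Δ`. -/
def IsRightFib (p : Y ⟶ X) : Prop :=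
  ∀ {a b : SimplexCategory} (f : a ⟶ b), LastPreserving f → IsCartesianOn p f

/-- A simplicial map is culf if it is cartesian on every active map of `Δ`. -/
def IsCulf (p : Y ⟶ X) : Prop :=
  ∀ {a b : SimplexCategory} (f : a ⟶ b), Active f → IsCartesianOn p f

theorem IsCartesianOn.of_comp {p : Y ⟶ X} {a b c : SimplexCategory} {g : c ⟶ a} {f : a ⟶ b}
    (hg : IsCartesianOn p g) (hgf : IsCartesianOn p (g ≫ f)) : IsCartesianOn p f := by
  unfold IsCartesianOn at *
  rw [op_comp, Y.map_comp, X.map_comp] at hgf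
  exact IsPullback.of_right hgf (p.naturality f.op) hg

theorem const_last_comp_of_lastPreserving {a b : SimplexCategory} {f : a ⟶ b}
    (hf : LastPreserving f) :
    const (mk 0) a (Fin.last a.len) ≫ f = const (mk 0) b (Fin.last b.len) := by
  rw [const_comp, hf]

/-- A simplicial map is a right fibration if and only if it is cartesian on
each last-point inclusion `[0] ⟶ [n]`. -/
theorem isRightFib_iff_cartesian_on_last_inclusions (p : Y ⟶ X) :
    IsRightFib p ↔ ∀ m : ℕ,
      IsCartesianOn p (SimplexCategory.const (SimplexCategory.mk 0)
        (SimplexCategory.mk m) (Fin.last m)) := by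
  refine ⟨fun h m => h _ rfl, fun h a b f hf => ?_⟩
  have hcomp : IsCartesianOn p (const (mk 0) a (Fin.last a.len) ≫ f) := by
    rw [const_last_comp_of_lastPreserving hf]
    exact h b.len
  exact (h a.len).of_comp hcomp

end Paper
end

section
/- If p : Y → X is a right fibration of simplicial spaces and X is a Segal space, then Y is a Segal space; moreover if X is additionally Rezk complete then so is Y. -/
open CategoryTheory SimplexCategory Opposite

namespace Paper

universe u

variable {X Y : SimplexCategoryᵒᵖ ⥤ Type u}

/-- The Segal condition: for each `m`, the square expressing
`X_{m+2} ≃ X_{m+1} ×_{X_0} X_1` (restriction to the first `m+2` vertices,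
the last edge, the last vertex and the initial vertex) is a pullback; this is
the iterated form of `X_n ≃ X_1 ×_{X_0} ⋯ ×_{X_0} X_1`. -/
def IsSegal (X : SimplexCategoryᵒᵖ ⥤ Type u) : Prop :=
  ∀ m : ℕ, IsPullback
    (X.map (SimplexCategory.δ (Fin.last (m + 2))).op)
    (X.map (SimplexCategory.mkOfLe (n := m + 2) ⟨m + 1, by omega⟩ (Fin.last (m + 2))
      (Fin.le_last _)).op)
    (X.map (SimplexCategory.const (SimplexCategory.mk 0) (SimplexCategory.mk (m + 1))
      (Fin.last (m + 1))).op)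
    (X.map (SimplexCategory.const (SimplexCategory.mk 0) (SimplexCategory.mk 1) 0).op)

/-- A `1`-simplex `g` of a simplicial space is an equivalence when it admits
`2`-simplices witnessing a left and a right inverse. -/
def IsEquiv (X : SimplexCategoryᵒᵖ ⥤ Type u) (g : X.obj (op (SimplexCategory.mk 1))) : Prop :=
  (∃ s : X.obj (op (SimplexCategory.mk 2)),
      X.map (SimplexCategory.δ (2 : Fin 3)).op s = g ∧
      X.map (SimplexCategory.δ (1 : Fin 3)).op s =
        X.map (SimplexCategory.σ (0 : Fin 1)).op (X.map (SimplexCategory.δ (1 : Fin 2)).op g)) ∧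
  (∃ t : X.obj (op (SimplexCategory.mk 2)),
      X.map (SimplexCategory.δ (0 : Fin 3)).op t = g ∧
      X.map (SimplexCategory.δ (1 : Fin 3)).op t =
        X.map (SimplexCategory.σ (0 : Fin 1)).op (X.map (SimplexCategory.δ (0 : Fin 2)).op g))

/-- Rezk completeness: the degeneracy `s₀ : X₀ → X₁` is an equivalence onto
the space `X₁ᵉᑫ` of equivalences. -/
def RezkComplete (X : SimplexCategoryᵒᵖ ⥤ Type u) : Prop :=
  Function.Injective (X.map (SimplexCategory.σ (0 : Fin 1)).op) ∧
  ∀ g, IsEquiv X g ↔ ∃ x, X.map (SimplexCategory.σ (0 : Fin 1)).op x = g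

open CategoryTheory.Limits in
lemma isPullback_iff_type {P A B C : Type u} (fst : P ⟶ A) (snd : P ⟶ B) (f : A ⟶ C)
    (g : B ⟶ C) :
    IsPullback fst snd f g ↔
      ((∀ x, f (fst x) = g (snd x)) ∧
      ∀ a b, f a = g b → ∃! x, fst x = a ∧ snd x = b) := by
  constructor
  · intro h
    refine ⟨fun x => by simpa using ConcreteCategory.congr_hom h.w x, fun a b hab => ?_⟩
    obtain ⟨x, hx⟩ := (PullbackCone.IsLimit.equivPullbackObj h.isLimit).surjective ⟨⟨a, b⟩, hab⟩
    have hx1 : fst x = a := by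
      have := PullbackCone.IsLimit.equivPullbackObj_apply_fst h.isLimit x
      rw [hx] at this; exact this.symm
    have hx2 : snd x = b := by
      have := PullbackCone.IsLimit.equivPullbackObj_apply_snd h.isLimit x
      rw [hx] at this; exact this.symm
    refine ⟨x, ⟨hx1, hx2⟩, ?_⟩
    rintro y ⟨h1, h2⟩
    exact PullbackCone.IsLimit.type_ext h.isLimit
      (show fst y = fst x by rw [h1, hx1]) (show snd y = snd x by rw [h2, hx2])
  · rintro ⟨comm, huniq⟩
    apply IsPullback.of_isLimit (c := PullbackCone.mk fst snd (by ext x; exact comm x))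
    apply (PullbackCone.isLimitEquivBijective _).symm.toFun
    constructor
    · intro x y hxy
      obtain ⟨z, _, hz⟩ := huniq (fst y) (snd y) (comm y)
      have e1 := congr_arg (fun q => (q : (Types.PullbackObj f g)).1.1) hxy
      have e2 := congr_arg (fun q => (q : (Types.PullbackObj f g)).1.2) hxy
      simp [PullbackCone.toPullbackObj] at e1 e2
      rw [hz x ⟨e1, e2⟩, hz y ⟨rfl, rfl⟩]
    · rintro ⟨⟨a, b⟩, hab⟩
      obtain ⟨x, ⟨h1, h2⟩, -⟩ := huniq a b hab
      exact ⟨x, by simp [PullbackCone.toPullbackObj, h1, h2]; exact ⟨h1, h2⟩⟩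

lemma map_comp_apply (Z : SimplexCategoryᵒᵖ ⥤ Type u) {a b c : SimplexCategory}
    (f : a ⟶ b) (g : b ⟶ c) (z : Z.obj (op c)) :
    Z.map (f ≫ g).op z = Z.map f.op (Z.map g.op z) := by
  rw [op_comp, Z.map_comp]; rfl

lemma nat_apply (p : Y ⟶ X) {a b : SimplexCategory} (f : a ⟶ b) (y : Y.obj (op b)) :
    p.app (op a) (Y.map f.op y) = X.map f.op (p.app (op b) y) :=
  FunctorToTypes.naturality (F := Y) (G := X) (φ := p) (f := f.op) (x := y)


/-- If `p : Y ⟶ X` is a right fibration and `X` is a Segal space then so is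
`Y`; if moreover `X` is Rezk complete then so is `Y`. -/
theorem rightFib_segal (p : Y ⟶ X) (hp : IsRightFib p) (hX : IsSegal X) :
    IsSegal Y ∧ (RezkComplete X → RezkComplete Y) := by
  have hsegal : IsSegal Y := by
    intro m
    set d : SimplexCategory.mk (m + 1) ⟶ SimplexCategory.mk (m + 2) :=
      SimplexCategory.δ (Fin.last (m + 2)) with hd
    set e : SimplexCategory.mk 1 ⟶ SimplexCategory.mk (m + 2) :=
      SimplexCategory.mkOfLe (n := m + 2) ⟨m + 1, by omega⟩ (Fin.last (m + 2))
        (Fin.le_last _) with he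
    set c : SimplexCategory.mk 0 ⟶ SimplexCategory.mk (m + 1) :=
      SimplexCategory.const _ _ (Fin.last (m + 1)) with hc
    set v : SimplexCategory.mk 0 ⟶ SimplexCategory.mk 1 :=
      SimplexCategory.const _ _ 0 with hv
    have hLe : LastPreserving e := rfl
    have hLc : LastPreserving c := rfl
    have hcomm : c ≫ d = v ≫ e := by
      apply SimplexCategory.Hom.ext_zero_left
      show d.toOrderHom (Fin.last (m + 1)) = e.toOrderHom 0
      have : e.toOrderHom 0 = ⟨m + 1, by simp⟩ := rfl
      rw [this, hd]
      show Fin.succAbove _ _ = _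
      simp [Fin.succAbove, Fin.lt_def, Fin.last]
    obtain ⟨hce_comm, hce_uniq⟩ := (isPullback_iff_type _ _ _ _).1 (hp e hLe)
    obtain ⟨-, hcc_uniq⟩ := (isPullback_iff_type _ _ _ _).1 (hp c hLc)
    obtain ⟨-, hX_uniq⟩ := (isPullback_iff_type _ _ _ _).1 (hX m)
    rw [isPullback_iff_type]
    constructor
    · intro y
      show Y.map c.op (Y.map d.op y) = Y.map v.op (Y.map e.op y)
      rw [← map_comp_apply, ← map_comp_apply, hcomm]
    · intro y₁ y' hyy
      have hx_compat : X.map c.op (p.app _ y₁) = X.map v.op (p.app _ y') := by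
        rw [← nat_apply, ← nat_apply, hyy]
      obtain ⟨x, ⟨hx1, hx2⟩, hxu⟩ := hX_uniq _ _ hx_compat
      obtain ⟨y, ⟨hy1, hy2⟩, hyu⟩ := hce_uniq y' x hx2.symm
      have hdy : Y.map d.op y = y₁ := by
        obtain ⟨z, -, hzu⟩ := hcc_uniq (Y.map c.op y₁) (p.app _ y₁) (nat_apply p c y₁)
        have h1 : z = Y.map d.op y := by
          apply (hzu _ _).symm
          constructor
          · rw [← map_comp_apply, hcomm, map_comp_apply, hy1, hyy]
          · rw [nat_apply, hy2, hx1]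
        have h2 : z = y₁ := (hzu _ ⟨rfl, rfl⟩).symm
        rw [← h1, h2]
      refine ⟨y, ⟨hdy, hy1⟩, ?_⟩
      rintro y₂ ⟨h1, h2⟩
      have hpx : p.app _ y₂ = x := by
        apply hxu
        exact ⟨by rw [← nat_apply, h1], by rw [← nat_apply, h2]⟩
      exact hyu y₂ ⟨h2, hpx⟩
  refine ⟨hsegal, fun hR => ?_⟩
  obtain ⟨hXinj, hXeq⟩ := hR
  have hσL : LastPreserving (SimplexCategory.σ (0 : Fin 1)) := @Subsingleton.elim (Fin 1) _ _ _
  obtain ⟨hσcomm, hσuniq⟩ := (isPullback_iff_type _ _ _ _).1 (hp _ hσL)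
  constructor
  · intro a b hab
    have hpab : p.app _ a = p.app _ b := by
      apply hXinj
      rw [← nat_apply, ← nat_apply, hab]
    obtain ⟨z, -, hzu⟩ := hσuniq (Y.map (SimplexCategory.σ (0 : Fin 1)).op a) (p.app _ a)
      (nat_apply p _ a)
    have h1 : z = a := (hzu a ⟨rfl, rfl⟩).symm
    have h2 : z = b := (hzu b ⟨hab.symm, hpab.symm⟩).symm
    rw [← h1, h2]
  · intro g
    constructor
    · rintro ⟨⟨s, hs1, hs2⟩, ⟨t, ht1, ht2⟩⟩
      have hEq : IsEquiv X (p.app _ g) := by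
        constructor
        · refine ⟨p.app _ s, ?_, ?_⟩
          · rw [← nat_apply, hs1]
          · rw [← nat_apply, hs2, ← nat_apply, ← nat_apply]
        · refine ⟨p.app _ t, ?_, ?_⟩
          · rw [← nat_apply, ht1]
          · rw [← nat_apply, ht2, ← nat_apply, ← nat_apply]
      obtain ⟨x₀, hx₀⟩ := (hXeq (p.app _ g)).1 hEq
      obtain ⟨y₀, ⟨hy₀, -⟩, -⟩ := hσuniq g x₀ hx₀.symm
      exact ⟨y₀, hy₀⟩
    · rintro ⟨y, rfl⟩
      set σ0 : SimplexCategory.mk 1 ⟶ SimplexCategory.mk 0 := SimplexCategory.σ (0 : Fin 1)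
      have hzero : ∀ f : SimplexCategory.mk 1 ⟶ SimplexCategory.mk 0, f = σ0 := fun f => by
        rw [SimplexCategory.eq_const_to_zero f, SimplexCategory.eq_const_to_zero σ0]
      have hid : ∀ f : SimplexCategory.mk 0 ⟶ SimplexCategory.mk 0, f = 𝟙 _ := fun f => by
        rw [SimplexCategory.eq_const_to_zero f, SimplexCategory.const_eq_id]
      set c2 : SimplexCategory.mk 2 ⟶ SimplexCategory.mk 0 :=
        SimplexCategory.const _ _ 0 with hc2
      have key : ∀ i : Fin 3,
          Y.map (SimplexCategory.δ i).op (Y.map c2.op y) = Y.map σ0.op y := fun i => by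
        rw [← map_comp_apply, hzero (SimplexCategory.δ i ≫ c2)]
      have key2 : ∀ j : Fin 2,
          Y.map (SimplexCategory.δ j).op (Y.map σ0.op y) = y := fun j => by
        rw [← map_comp_apply, hid (SimplexCategory.δ j ≫ σ0)]
        simp
      constructor
      · exact ⟨Y.map c2.op y, key 2, by rw [key 1, key2 1]⟩
      · exact ⟨Y.map c2.op y, key 0, by rw [key 1, key2 0]⟩

end Paper
end

section
/- A simplicial map between Segal spaces is a right fibration if and only if it is cartesian on the single coface map d^0 : [0] → [1]; i.e., the square with horizontal maps d_0 : Y_1 → Y_0, d_0 : X_1 → X_0 being a pullback implies all squares over last-point-preserving maps are pullbacks. -/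
open CategoryTheory SimplexCategory Opposite

namespace Paper

universe u

variable {X Y : SimplexCategoryᵒᵖ ⥤ Type u}

/-!
Both conditions are about maps `[a] ⟶ [b]` preserving the last vertex, and every such map `f`
satisfies `v_a ≫ f = v_b`, where `v_n : [0] ⟶ [n]` picks the last vertex. By pasting and
cancelling pullback squares it therefore suffices to show that `p` is cartesian on every `v_n`.
This goes by induction: `v_1 = d⁰`, and `v_{n+2}` factors as `d⁰` followed by the last edge
`[1] ⟶ [n+2]`. The Segal squares of `X` and `Y` exhibit `Y_{n+2}` over `X_{n+2}` as the
pullback of `Y_{n+1} → Y_0` (cartesian over `X` by induction) along the initial vertex of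
`Y_1`, which makes `p` cartesian on the last edge.
-/

abbrev lastVertex (n : ℕ) : mk 0 ⟶ mk n :=
  const _ _ (Fin.last n)

abbrev lastEdge (m : ℕ) : mk 1 ⟶ mk (m + 2) :=
  mkOfLe (n := m + 2) ⟨m + 1, by omega⟩ (Fin.last (m + 2)) (Fin.le_last _)

lemma lastVertex_zero : lastVertex 0 = 𝟙 (mk 0) := by
  ext x
  fin_cases x
  rfl

lemma lastVertex_one : lastVertex 1 = δ 0 := by
  ext x
  fin_cases x
  rfl

lemma lastVertex_add_two (m : ℕ) : lastVertex (m + 2) = δ 0 ≫ lastEdge m := by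
  ext x
  fin_cases x
  rfl

lemma lastVertex_comp_of_lastPreserving {a b : SimplexCategory} (f : a ⟶ b)
    (hf : LastPreserving f) : lastVertex a.len ≫ f = lastVertex b.len := by
  ext x
  fin_cases x
  exact congrArg Fin.val hf

namespace IsCartesianOn

variable {p : Y ⟶ X}

lemma of_isIso {a b : SimplexCategory} (f : a ⟶ b) [IsIso f] : IsCartesianOn p f :=
  IsPullback.of_horiz_isIso ⟨p.naturality f.op⟩

lemma comp {a b c : SimplexCategory} {f : a ⟶ b} {g : b ⟶ c}
    (hf : IsCartesianOn p f) (hg : IsCartesianOn p g) : IsCartesianOn p (f ≫ g) := by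
  simpa [IsCartesianOn] using hg.paste_horiz hf

lemma of_comp_s9 {a b c : SimplexCategory} {f : a ⟶ b} {g : b ⟶ c}
    (hf : IsCartesianOn p f) (hfg : IsCartesianOn p (f ≫ g)) : IsCartesianOn p g :=
  IsPullback.of_right (by simpa [IsCartesianOn] using hfg) (p.naturality g.op) hf

lemma lastEdge (hX : IsSegal X) (hY : IsSegal Y) (m : ℕ)
    (h : IsCartesianOn p (lastVertex (m + 1))) : IsCartesianOn p (lastEdge m) := by
  have hpaste := (hY m).paste_horiz h.flip
  rw [p.naturality, p.naturality] at hpaste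
  exact (hpaste.of_right (p.naturality _).symm (hX m)).flip

lemma lastVertex_of_segal (hX : IsSegal X) (hY : IsSegal Y) (h : IsCartesianOn p (δ (0 : Fin 2)))
    (n : ℕ) : IsCartesianOn p (lastVertex n) := by
  induction n with
  | zero => rw [lastVertex_zero]; exact of_isIso _
  | succ n ih =>
    cases n with
    | zero => rwa [lastVertex_one]
    | succ m => rw [lastVertex_add_two]; exact h.comp (lastEdge hX hY m ih)

end IsCartesianOn

/-- A simplicial map between Segal spaces is a right fibration if and only if
it is cartesian on the single coface map `d⁰ : [0] ⟶ [1]`. -/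
theorem isRightFib_iff_of_segal (p : Y ⟶ X) (hX : IsSegal X) (hY : IsSegal Y) :
    IsRightFib p ↔ IsCartesianOn p (SimplexCategory.δ (0 : Fin 2)) := by
  refine ⟨fun h => h _ rfl, fun h a b f hf => ?_⟩
  have hv := IsCartesianOn.lastVertex_of_segal hX hY h
  exact (hv a.len).of_comp_s9 (by rw [lastVertex_comp_of_lastPreserving f hf]; exact hv b.len)

end Paper
end

section
/- A simplicial map p : Y → X of simplicial spaces is a right fibration if and only if for every y ∈ Y_0 the induced simplicial map on slices Y_{/y} → X_{/p y} is a levelwise equivalence. -/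
open CategoryTheory SimplexCategory Opposite

namespace Paper

universe u

variable {X Y : SimplexCategoryᵒᵖ ⥤ Type u}

/-- The induced map on fibers: for a simplicial map `p : Y ⟶ X`, a map
`f : a ⟶ b` of `Δ` and `y ∈ Y_a`, the map from the fiber of
`Y.map f : Y_b → Y_a` over `y` to the fiber of `X.map f : X_b → X_a` over
`p y`. -/
def fiberMap (p : Y ⟶ X) {a b : SimplexCategory} (f : a ⟶ b) (y : Y.obj (op a)) :
    {s : Y.obj (op b) // Y.map f.op s = y} →
      {s : X.obj (op b) // X.map f.op s = p.app (op a) y} :=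
  fun s => ⟨p.app (op b) s.1, by
    rw [← FunctorToTypes.naturality p f.op s.1, s.2]⟩

open Limits in
/-- Being cartesian on `f` is equivalent to fiberwise bijectivity. -/
lemma isCartesianOn_iff (p : Y ⟶ X) {a b : SimplexCategory} (f : a ⟶ b) :
    IsCartesianOn p f ↔ ∀ y, Function.Bijective (fiberMap p f y) := by
  have w : CommSq (Y.map f.op) (p.app (op b)) (p.app (op a)) (X.map f.op) :=
    ⟨p.naturality f.op⟩
  set c : PullbackCone (p.app (op a)) (X.map f.op) :=
    PullbackCone.mk _ _ w.w with hc
  have key : Function.Bijective c.toPullbackObj ↔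
      ∀ y, Function.Bijective (fiberMap p f y) := by
    constructor
    · intro hb y
      constructor
      · rintro ⟨s, hs⟩ ⟨t, ht⟩ hst
        apply Subtype.ext
        apply hb.1
        apply Subtype.ext
        exact Prod.ext (hs.trans ht.symm) (congrArg Subtype.val hst)
      · rintro ⟨x, hx⟩
        obtain ⟨s, hs⟩ := hb.2 ⟨(y, x), hx.symm⟩
        exact ⟨⟨s, congrArg (fun z => z.1.1) hs⟩,
          Subtype.ext (congrArg (fun z => z.1.2) hs)⟩
    · intro h
      constructor
      · intro s t hst
        have h1 : Y.map f.op s = Y.map f.op t := congrArg (fun z => z.1.1) hst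
        have h2 : p.app (op b) s = p.app (op b) t := congrArg (fun z => z.1.2) hst
        exact congrArg Subtype.val
          ((h (Y.map f.op t)).1 (a₁ := ⟨s, h1⟩) (a₂ := ⟨t, rfl⟩) (Subtype.ext h2))
      · rintro ⟨⟨y, x⟩, e⟩
        obtain ⟨⟨s, hs⟩, hsx⟩ := (h y).2 ⟨x, e.symm⟩
        exact ⟨s, Subtype.ext (Prod.ext hs (congrArg Subtype.val hsx))⟩
  constructor
  · intro h
    exact key.mp ((PullbackCone.isLimitEquivBijective c) h.isLimit)
  · intro h
    exact IsPullback.of_isLimit ((PullbackCone.isLimitEquivBijective c).symm (key.mpr h))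

lemma fiberMap_bijective_id (p : Y ⟶ X) {a : SimplexCategory} (y : Y.obj (op a)) :
    Function.Bijective (fiberMap p (𝟙 a) y) := by
  constructor
  · rintro ⟨s, hs⟩ ⟨t, ht⟩ _
    apply Subtype.ext
    simp only [op_id, FunctorToTypes.map_id_apply] at hs ht
    show s = t
    rw [hs, ht]
  · rintro ⟨x, hx⟩
    simp only [op_id, FunctorToTypes.map_id_apply] at hx
    exact ⟨⟨y, by simp⟩, Subtype.ext hx.symm⟩

lemma last_bij (p : Y ⟶ X)
    (H : ∀ (y : Y.obj (op (SimplexCategory.mk 0))) (k : ℕ),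
      Function.Bijective (fiberMap p
        (SimplexCategory.const (SimplexCategory.mk 0) (SimplexCategory.mk (k + 1))
          (Fin.last (k + 1))) y))
    (n : SimplexCategory) (y0 : Y.obj (op (SimplexCategory.mk 0))) :
    Function.Bijective
      (fiberMap p (SimplexCategory.const (SimplexCategory.mk 0) n (Fin.last n.len)) y0) := by
  induction n using SimplexCategory.rec with
  | mk m =>
    cases m with
    | zero =>
      have hid : SimplexCategory.const (SimplexCategory.mk 0) (SimplexCategory.mk 0)
          (Fin.last (SimplexCategory.mk 0).len) = 𝟙 _ := by
        rw [show (Fin.last (SimplexCategory.mk 0).len)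
          = (0 : Fin ((SimplexCategory.mk 0).len + 1)) from rfl]
        exact SimplexCategory.const_eq_id
      rw [hid]
      exact fiberMap_bijective_id p y0
    | succ k => exact H y0 k

/-- A simplicial map `p : Y ⟶ X` is a right fibration if and only if for
every `y ∈ Y_0` the induced map on slices `Y_{/y} → X_{/p y}` is a levelwise
equivalence.  Here `(Y_{/y})_k` is the fiber of the last-vertex map
`Y_{k+1} → Y_0` over `y`. -/
theorem isRightFib_iff_slices (p : Y ⟶ X) :
    IsRightFib p ↔ ∀ (y : Y.obj (op (SimplexCategory.mk 0))) (k : ℕ),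
      Function.Bijective (fiberMap p
        (SimplexCategory.const (SimplexCategory.mk 0) (SimplexCategory.mk (k + 1))
          (Fin.last (k + 1))) y) := by
  constructor
  · intro h y k
    have hlp : LastPreserving (SimplexCategory.const (SimplexCategory.mk 0)
        (SimplexCategory.mk (k + 1)) (Fin.last (k + 1))) := rfl
    exact (isCartesianOn_iff p _).mp (h _ hlp) y
  · intro H a b f hf
    rw [isCartesianOn_iff]
    intro y
    set ta := SimplexCategory.const (SimplexCategory.mk 0) a (Fin.last a.len) with hta
    set tb := SimplexCategory.const (SimplexCategory.mk 0) b (Fin.last b.len) with htb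
    have hcomp : ta ≫ f = tb := by
      rw [hta, htb, SimplexCategory.const_comp,
        show f.toOrderHom (Fin.last a.len) = Fin.last b.len from hf]
    set y0 := Y.map ta.op y with hy0
    have hA := last_bij p H a y0
    have hB := last_bij p H b y0
    constructor
    · rintro ⟨s, hs⟩ ⟨t, ht⟩ hst
      apply Subtype.ext
      have hps : p.app (op b) s = p.app (op b) t := congrArg Subtype.val hst
      have hsY : Y.map tb.op s = y0 := by
        rw [← hcomp, op_comp, FunctorToTypes.map_comp_apply, hs]
      have htY : Y.map tb.op t = y0 := by
        rw [← hcomp, op_comp, FunctorToTypes.map_comp_apply, ht]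
      show s = t
      exact congrArg Subtype.val
        (hB.1 (a₁ := ⟨s, hsY⟩) (a₂ := ⟨t, htY⟩) (Subtype.ext hps))
    · rintro ⟨x, hx⟩
      have hx0 : X.map tb.op x = p.app (op (SimplexCategory.mk 0)) y0 := by
        rw [← hcomp, op_comp, FunctorToTypes.map_comp_apply, hx]
        exact (FunctorToTypes.naturality p ta.op y).symm
      obtain ⟨⟨s, hsY⟩, hsx⟩ := hB.2 ⟨x, hx0⟩
      have hps : p.app (op b) s = x := congrArg Subtype.val hsx
      have h1 : Y.map ta.op (Y.map f.op s) = y0 := by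
        rw [← FunctorToTypes.map_comp_apply, ← op_comp, hcomp]
        exact hsY
      have hfib : p.app (op a) (Y.map f.op s) = p.app (op a) y := by
        calc p.app (op a) (Y.map f.op s)
            = X.map f.op (p.app (op b) s) := FunctorToTypes.naturality p f.op s
          _ = X.map f.op x := by rw [hps]
          _ = p.app (op a) y := hx
      have hYeq : Y.map f.op s = y := congrArg Subtype.val
        (hA.1 (a₁ := ⟨Y.map f.op s, h1⟩) (a₂ := ⟨y, hy0.symm⟩) (Subtype.ext hfib))
      exact ⟨⟨s, hYeq⟩, Subtype.ext hps⟩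

end Paper
end

section
/- Let L : D → C be a semi-left-exact reflective localization of a finitely-complete ∞-category D (C a reflective full subcategory with reflector L and unit α : id ⇒ L). Then the class of maps inverted by L and the class of maps on which α is cartesian (i.e. maps f : Y → X whose naturality square Y → LY, X → LX is a pullback) form a factorization system on D. -/
open CategoryTheory

namespace Paper

variable {C D : Type*} [Category C] [Category D]

/-- The class of maps inverted by the reflector `L`. -/
def LClass (ι : C ⥤ D) [Reflective ι] : MorphismProperty D :=
  fun _ _ f => IsIso ((reflector ι).map f)

/-- The class of maps on which the unit `α : id ⇒ L` is cartesian, i.e. maps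
`f : Y ⟶ X` whose naturality square along the unit is a pullback. -/
def RClass (ι : C ⥤ D) [Reflective ι] : MorphismProperty D :=
  fun Y X f => IsPullback ((reflectorAdjunction ι).unit.app Y) f
    ((reflector ι ⋙ ι).map f) ((reflectorAdjunction ι).unit.app X)

/-- A reflective localization `L` of a finitely-complete category is
semi-left-exact if `L` preserves every pullback square one of whose corners
is a pullback of a cospan lying in the reflective subcategory. -/
def SemiLeftExact (ι : C ⥤ D) [Reflective ι] : Prop :=
  ∀ {Y X S T : D} (f1 : Y ⟶ T) (f2 : Y ⟶ X) (g1 : T ⟶ S) (g2 : X ⟶ S),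
    ι.essImage S → ι.essImage T → IsPullback f1 f2 g1 g2 →
    IsPullback ((reflector ι).map f1) ((reflector ι).map f2)
      ((reflector ι).map g1) ((reflector ι).map g2)

/-- The reflector inverts the unit. -/
lemma isIso_reflector_map_unit (ι : C ⥤ D) [Reflective ι] (X : D) :
    IsIso ((reflector ι).map ((reflectorAdjunction ι).unit.app X)) := by
  have h := (reflectorAdjunction ι).left_triangle_components X
  haveI : IsIso ((reflector ι).map ((reflectorAdjunction ι).unit.app X) ≫
      (reflectorAdjunction ι).counit.app ((reflector ι).obj X)) := by
    rw [h]; exact ⟨⟨𝟙 _, by simp, by simp⟩⟩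
  exact IsIso.of_isIso_comp_right _ ((reflectorAdjunction ι).counit.app ((reflector ι).obj X))

/-- If `L l` is an isomorphism, precomposition with `l` is a bijection on maps
into objects of the subcategory. -/
lemma bij_precomp (ι : C ⥤ D) [Reflective ι] {A B : D} (l : A ⟶ B)
    (hl : IsIso ((reflector ι).map l)) (X : C) :
    Function.Bijective (fun g : B ⟶ ι.obj X => l ≫ g) := by
  have adj := reflectorAdjunction ι
  have key : (fun g : B ⟶ ι.obj X => l ≫ g) =
      ((reflectorAdjunction ι).homEquiv A X) ∘ (fun h : (reflector ι).obj B ⟶ X =>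
        (reflector ι).map l ≫ h) ∘ ((reflectorAdjunction ι).homEquiv B X).symm := by
    funext g
    simp only [Function.comp_apply]
    rw [Adjunction.homEquiv_naturality_left]
    simp
  rw [key]
  have hmid : Function.Bijective (fun h : (reflector ι).obj B ⟶ X =>
      (reflector ι).map l ≫ h) := by
    haveI := hl
    constructor
    · intro a b hab
      exact (cancel_epi ((reflector ι).map l)).mp hab
    · intro a
      exact ⟨inv ((reflector ι).map l) ≫ a, by simp⟩
  exact (((reflectorAdjunction ι).homEquiv A X).bijective.comp hmid).comp
    ((reflectorAdjunction ι).homEquiv B X).symm.bijective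

/-- For a semi-left-exact reflective localization `L : D → C` of a
finitely-complete category `D`, the maps inverted by `L` and the maps on
which the unit is cartesian form a factorization system on `D`: both classes
contain the isomorphisms and are closed under composition, the left class is
left orthogonal to the right class (unique lifting), and every map factors
as a map in the left class followed by a map in the right class. -/
theorem semiLeftExact_factorization_system [Limits.HasFiniteLimits D]
    (ι : C ⥤ D) [Reflective ι] (sle : SemiLeftExact ι) :
    (∀ {A B : D} (f : A ⟶ B), IsIso f → LClass ι f ∧ RClass ι f) ∧
    (∀ {A B B' : D} (f : A ⟶ B) (g : B ⟶ B'),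
      LClass ι f → LClass ι g → LClass ι (f ≫ g)) ∧
    (∀ {A B B' : D} (f : A ⟶ B) (g : B ⟶ B'),
      RClass ι f → RClass ι g → RClass ι (f ≫ g)) ∧
    (∀ {A B A' B' : D} (l : A ⟶ B) (r : A' ⟶ B'), LClass ι l → RClass ι r →
      ∀ (u : A ⟶ A') (v : B ⟶ B'), u ≫ r = l ≫ v →
        ∃! d : B ⟶ A', l ≫ d = u ∧ d ≫ r = v) ∧
    (∀ {A B : D} (f : A ⟶ B),
      ∃ (M : D) (l : A ⟶ M) (r : M ⟶ B), LClass ι l ∧ RClass ι r ∧ l ≫ r = f) := by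
  have adjnat := (reflectorAdjunction ι).unit.naturality
  refine ⟨?_, ?_, ?_, ?_, ?_⟩
  · intro A B f hf
    haveI := hf
    constructor
    · exact (inferInstance : IsIso ((reflector ι).map f))
    · exact IsPullback.of_vert_isIso ⟨by simp⟩
  · intro A B B' f g hf hg
    haveI : IsIso ((reflector ι).map f) := hf
    haveI : IsIso ((reflector ι).map g) := hg
    show IsIso ((reflector ι).map (f ≫ g))
    rw [Functor.map_comp]
    infer_instance
  · intro A B B' f g hf hg
    show IsPullback _ _ ((reflector ι ⋙ ι).map (f ≫ g)) _
    rw [Functor.map_comp]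
    exact hf.paste_vert hg
  · intro A B A' B' l r hl hr u v comm
    obtain ⟨w, hw⟩ := (bij_precomp ι l hl ((reflector ι).obj A')).2
      (u ≫ (reflectorAdjunction ι).unit.app A')
    simp only at hw
    have hinjA := (bij_precomp ι l hl ((reflector ι).obj A')).1
    have hinjB := (bij_precomp ι l hl ((reflector ι).obj B')).1
    have hcompat : w ≫ (reflector ι ⋙ ι).map r =
        v ≫ (reflectorAdjunction ι).unit.app B' := by
      apply hinjB
      show l ≫ _ = l ≫ _
      rw [← Category.assoc, hw, Category.assoc, ← adjnat r, Functor.id_map,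
        ← Category.assoc, comm, Category.assoc]
    refine ⟨hr.lift w v hcompat, ⟨?_, hr.lift_snd _ _ _⟩, ?_⟩
    · apply hr.hom_ext
      · rw [Category.assoc, hr.lift_fst, hw]
      · rw [Category.assoc, hr.lift_snd]
        exact comm.symm
    · rintro d' ⟨h1, h2⟩
      apply hr.hom_ext
      · rw [hr.lift_fst]
        apply hinjA
        show l ≫ _ = l ≫ _
        rw [← Category.assoc, h1, hw]
      · rw [hr.lift_snd]
        exact h2
  · intro A B f
    set η := (reflectorAdjunction ι).unit with hη
    set M := Limits.pullback (η.app B) ((reflector ι ⋙ ι).map f) with hM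
    set p1 := Limits.pullback.fst (η.app B) ((reflector ι ⋙ ι).map f) with hp1
    set p2 := Limits.pullback.snd (η.app B) ((reflector ι ⋙ ι).map f) with hp2
    have pb : IsPullback p1 p2 (η.app B) ((reflector ι ⋙ ι).map f) :=
      IsPullback.of_hasPullback _ _
    have hlf : f ≫ η.app B = η.app A ≫ (reflector ι ⋙ ι).map f := by
      simpa using adjnat f
    set l := Limits.pullback.lift f (η.app A) hlf with hldef
    have hl1 : l ≫ p1 = f := Limits.pullback.lift_fst _ _ _
    have hl2 : l ≫ p2 = η.app A := Limits.pullback.lift_snd _ _ _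
    have hC := sle p2 p1 ((reflector ι ⋙ ι).map f) (η.app B)
      (ι.obj_mem_essImage _) (ι.obj_mem_essImage _) pb.flip
    haveI hB := isIso_reflector_map_unit ι B
    haveI hA := isIso_reflector_map_unit ι A
    have hsndiso : IsIso ((reflector ι).map p2) := by
      refine ⟨⟨hC.lift (𝟙 _) ((reflector ι).map ((reflector ι ⋙ ι).map f) ≫
        inv ((reflector ι).map (η.app B))) (by simp), ?_, hC.lift_fst _ _ _⟩⟩
      apply hC.hom_ext
      · rw [Category.assoc, hC.lift_fst]
        simp
      · rw [Category.assoc, hC.lift_snd, ← Category.assoc, hC.w]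
        simp
    have hLl : IsIso ((reflector ι).map l) := by
      have hfac : (reflector ι).map l ≫ (reflector ι).map p2 =
          (reflector ι).map (η.app A) := by
        rw [← Functor.map_comp, hl2]
      haveI := hsndiso
      exact IsIso.of_isIso_fac_right hfac
    refine ⟨M, l, p1, hLl, ?_, hl1⟩
    -- RClass p1
    have sq_nat : IsPullback (η.app (ι.obj ((reflector ι).obj A)))
        ((reflector ι ⋙ ι).map f)
        ((reflector ι ⋙ ι).map ((reflector ι ⋙ ι).map f))
        (η.app (ι.obj ((reflector ι).obj B))) :=
      IsPullback.of_horiz_isIso ⟨by simpa using (adjnat ((reflector ι ⋙ ι).map f)).symm⟩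
    have big := pb.flip.paste_horiz sq_nat
    haveI : Limits.PreservesLimitsOfSize.{0, 0} ι :=
      (reflectorAdjunction ι).rightAdjoint_preservesLimits
    have hι := hC.map ι
    have e1 : p2 ≫ η.app (ι.obj ((reflector ι).obj A)) =
        η.app M ≫ ι.map ((reflector ι).map p2) := by
      have h := adjnat p2; simp at h ⊢; exact h
    have e2 : η.app (ι.obj ((reflector ι).obj B)) =
        ι.map ((reflector ι).map (η.app B)) := unit_obj_eq_map_unit ι B
    rw [e1, e2] at big
    have hp : η.app M ≫ ι.map ((reflector ι).map p1) = p1 ≫ η.app B := by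
      have h := (adjnat p1).symm; simp at h ⊢; exact h
    exact big.of_right hp hι

end Paper
end
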